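/- Let V and C be types, r : V → V → Prop, and φ : V → Option C, with PCDAG edge relation rC c d := c ≠ d ∧ ∃ u v : V, φ u = some c ∧ φ v = some d ∧ medAdj u v. If u v : V and c d : C satisfy Relation.TransGen r u v, φ u = some c, φ v = some d, and c ≠ d, then Relation.TransGen rC c d; that is, a directed path from u to v in the base graph yields a directed path from the cluster of u to the cluster of v in the PCDAG. -/

import Mathlib

def medAdj {V C : Type*} (r : V → V → Prop) (φ : V → Option C) (u v : V) : Prop :=
  ∃ l : List V, List.Chain r u (l ++ [v]) ∧ ∀ x ∈ l, φ x = none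

/-!
Follow the path from `u` to `v` and cut it at every mapped vertex: each segment between two
consecutive mapped vertices is a mediated adjacency, hence an edge between their clusters, or a
loop when both lie in the same cluster. Loops disappear in the transitive closure, and since
`c ≠ d` at least one genuine edge remains.
-/

theorem Relation.TransGen.ne_and {α : Type*} {R : α → α → Prop} {a b : α}
    (h : Relation.TransGen R a b) (hab : a ≠ b) :
    Relation.TransGen (fun x y => x ≠ y ∧ R x y) a b := by
  have hrefl : Relation.ReflTransGen (fun x y => x ≠ y ∧ R x y) a b := by
    refine Relation.ReflTransGen.lift' id (fun x y hxy => ?_) _ _ h.to_reflTransGen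
    by_cases hxy_eq : x = y
    · exact hxy_eq ▸ .refl
    · exact .single ⟨hxy_eq, hxy⟩
  exact (Relation.reflTransGen_iff_eq_or_transGen.mp hrefl).resolve_left hab.symm

section Cluster

variable {V C : Type*} {r : V → V → Prop} {φ : V → Option C}

theorem medAdj_of_rel {u v : V} (h : r u v) : medAdj r φ u v :=
  ⟨[], List.IsChain.cons_cons h (.singleton v), by simp⟩

theorem medAdj.tail {u w v : V} (huw : medAdj r φ u w) (hw : φ w = none) (hwv : r w v) :
    medAdj r φ u v := by
  obtain ⟨l, hchain, hl⟩ := huw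
  refine ⟨l ++ [w], ?_, ?_⟩
  · change List.IsChain r (u :: (l ++ [w] ++ [v]))
    rw [List.append_assoc, List.singleton_append, List.isChain_cons_split]
    exact ⟨hchain, List.IsChain.cons_cons hwv (.singleton v)⟩
  · simpa [or_imp, forall_and, hw] using hl

variable (r φ) in
def clusterMedAdj (c d : C) : Prop :=
  ∃ u v : V, φ u = some c ∧ φ v = some d ∧ medAdj r φ u v

theorem exists_medAdj_of_transGen {u x : V} {c : C} (hu : φ u = some c)
    (h : Relation.TransGen r u x) :
    ∃ w e, φ w = some e ∧ Relation.ReflTransGen (clusterMedAdj r φ) c e ∧ medAdj r φ w x := by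
  induction h with
  | single hux => exact ⟨u, c, hu, .refl, medAdj_of_rel hux⟩
  | @tail x y _ hxy ih =>
    obtain ⟨w, e, hw, hce, hwx⟩ := ih
    cases hx : φ x with
    | none => exact ⟨w, e, hw, hce, hwx.tail hx hxy⟩
    | some f => exact ⟨x, f, hx, hce.tail ⟨w, x, hw, hx, hwx⟩, medAdj_of_rel hxy⟩

theorem transGen_clusterMedAdj_of_transGen {u v : V} {c d : C} (hu : φ u = some c)
    (hv : φ v = some d) (h : Relation.TransGen r u v) :
    Relation.TransGen (clusterMedAdj r φ) c d := by
  obtain ⟨w, e, hw, hce, hwv⟩ := exists_medAdj_of_transGen hu h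
  exact Relation.TransGen.tail' hce ⟨w, v, hw, hv, hwv⟩

end Cluster

theorem pcdag_preserves_directed_paths {V C : Type*}
    (r : V → V → Prop) (φ : V → Option C)
    (rC : C → C → Prop)
    (hrC : ∀ c d, rC c d ↔
      (c ≠ d ∧ ∃ u v : V, φ u = some c ∧ φ v = some d ∧ medAdj r φ u v))
    (u v : V) (c d : C)
    (h : Relation.TransGen r u v) (hu : φ u = some c) (hv : φ v = some d)
    (hcd : c ≠ d) :
    Relation.TransGen rC c d :=
  Relation.TransGen.mono (fun a b hab => (hrC a b).mpr hab) _ _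
    ((transGen_clusterMedAdj_of_transGen hu hv h).ne_and hcd)
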